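/- For every i ∈ I, the element S_i⁴ is central in the group Ŵ. -/

import Mathlib

/-! The group `Ŵ` associated to a generalized Cartan matrix `A`. -/

namespace PaperAmalgams

variable {I : Type*}

/-- Alternating word `S_i S_j S_i ⋯` with `n` factors, in the free group on `I`. -/
def altWord (i j : I) : ℕ → FreeGroup I
  | 0 => 1
  | n + 1 => FreeGroup.of i * altWord j i n

/-- The edge labels of the Dynkin diagram: `m i j = 2, 3, 4, 6` according as
`A i j * A j i = 0, 1, 2, 3`, and `∞` (encoded as `0`) if `A i j * A j i ≥ 4`.
(Intended to be used for `i ≠ j`.) -/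
def mLabel (A : I → I → ℤ) (i j : I) : ℕ :=
  if A i j * A j i = 0 then 2
  else if A i j * A j i = 1 then 3
  else if A i j * A j i = 2 then 4
  else if A i j * A j i = 3 then 6
  else 0

/-- The defining relators of `Ŵ`: the Artin relators
`(S_i S_j ⋯)(S_j S_i ⋯)⁻¹` (with `m i j` factors in each parenthesis) for `i ≠ j`
with `m i j ≠ ∞`, together with the relators `S_i² S_j S_i⁻² S_j∓¹`
(sign according to the parity of `A i j`) for `i ≠ j`. -/
def whatRels (A : I → I → ℤ) : Set (FreeGroup I) :=
  {r | ∃ i j : I, i ≠ j ∧ mLabel A i j ≠ 0 ∧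
      r = altWord i j (mLabel A i j) * (altWord j i (mLabel A i j))⁻¹} ∪
  {r | ∃ i j : I, i ≠ j ∧
      r = FreeGroup.of i ^ 2 * FreeGroup.of j * (FreeGroup.of i ^ 2)⁻¹ *
        (if Even (A i j) then (FreeGroup.of j)⁻¹ else FreeGroup.of j)}

/-- The group `Ŵ`. -/
abbrev What (A : I → I → ℤ) : Type _ := PresentedGroup (whatRels A)

/-- The generator `S_i` of `Ŵ`. -/
def S (A : I → I → ℤ) (i : I) : What A := PresentedGroup.of i

end PaperAmalgams

/-!
The relator `S_i² S_j S_i⁻² S_j^{∓1}` says that conjugation by `S_i²` sends each generator `S_j`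
to `S_j` or to `S_j⁻¹`. Either way conjugation by `S_i⁴ = (S_i²)²` fixes `S_j`, so `S_i⁴` commutes
with every generator and hence with all of `Ŵ`.
-/

theorem commute_sq_of_conj_eq_or_eq_inv {G : Type*} [Group G] {c b : G}
    (h : c * b * c⁻¹ = b ∨ c * b * c⁻¹ = b⁻¹) : Commute (c ^ 2) b := by
  have hconj : MulAut.conj (c ^ 2) b = b := by
    rw [pow_two, map_mul, MulAut.mul_apply]
    rcases h with h | h <;> simp only [MulAut.conj_apply, h, map_inv, inv_inv]
  rwa [MulAut.conj_apply, mul_inv_eq_iff_eq_mul] at hconj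

theorem PresentedGroup.mem_center_of_forall_commute_of {α : Type*} {rels : Set (FreeGroup α)}
    {x : PresentedGroup rels} (h : ∀ a, Commute x (of a)) : x ∈ Subgroup.center _ := by
  have hle : Subgroup.closure (Set.range of) ≤ Subgroup.centralizer {x} := by
    rw [Subgroup.closure_le]
    rintro _ ⟨a, rfl⟩
    exact Subgroup.mem_centralizer_singleton_iff.2 (h a).symm.eq
  rw [closure_range_of] at hle
  exact Subgroup.mem_center_iff.2 fun g ↦
    Subgroup.mem_centralizer_singleton_iff.1 (hle (Subgroup.mem_top g))

namespace PaperAmalgams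

variable {I : Type*} (A : I → I → ℤ)

theorem S_sq_conj {i j : I} (hij : i ≠ j) :
    S A i ^ 2 * S A j * (S A i ^ 2)⁻¹ = if Even (A i j) then S A j else (S A j)⁻¹ := by
  have hrel := PresentedGroup.one_of_mem (rels := whatRels A) (Or.inr ⟨i, j, hij, rfl⟩)
  split_ifs at hrel ⊢ <;>
    simp only [map_mul, map_pow, map_inv, mul_eq_one_iff_eq_inv, inv_inv] at hrel <;>
    exact hrel

theorem commute_S_pow_four_S (i j : I) : Commute (S A i ^ 4) (S A j) := by
  obtain rfl | hij := eq_or_ne i j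
  · exact (Commute.self_pow _ 4).symm
  rw [show 4 = 2 * 2 from rfl, pow_mul]
  refine commute_sq_of_conj_eq_or_eq_inv ?_
  rw [S_sq_conj A hij]
  split_ifs
  exacts [Or.inl rfl, Or.inr rfl]

end PaperAmalgams

open PaperAmalgams in
theorem what_fourth_power_central_general {I : Type*} (A : I → I → ℤ)
    (i : I) :
    S A i ^ 4 ∈ Subgroup.center (What A) :=
  PresentedGroup.mem_center_of_forall_commute_of (commute_S_pow_four_S A i)

open PaperAmalgams in
/-- For every `i`, the element `S_i⁴` is central in `Ŵ`. -/
theorem what_fourth_power_central {I : Type*} (A : I → I → ℤ)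
    (hA_diag : ∀ i, A i i = 2)
    (hA_off : ∀ i j, i ≠ j → A i j ≤ 0)
    (hA_zero : ∀ i j, A i j = 0 ↔ A j i = 0)
    (i : I) :
    S A i ^ 4 ∈ Subgroup.center (What A) :=
  what_fourth_power_central_general A i
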